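/- arXiv:math/0602477 — 3 statements merged into one kernel-verified Lean document; each statement's English description precedes it below -/
import Mathlib

section
/- For every natural number n with gcd(n,6) = 1 and n > 1, the abelian group G = (ℤ/nℤ)² admits an unmixed Beauville structure, i.e. there exist pairs (a₁,c₁) and (a₂,c₂), each generating G, with Σ(a₁,c₁) ∩ Σ(a₂,c₂) = {0}. -/
/-- For an additively written abelian group, `Σ(a,c) := ⋃_{i ≥ 0} {i•a, i•c, i•(a+c)}`. -/
def beauvilleSigmaAdd (G : Type*) [AddCommGroup G] (a c : G) : Set G :=
  ⋃ i : ℕ, {i • a, i • c, i • (a + c)}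

lemma smul_pair (n : ℕ) (i : ℕ) (u v : ZMod n) :
    i • ((u, v) : ZMod n × ZMod n) = ((i:ZMod n) * u, (i:ZMod n) * v) := by
  simp [Prod.ext_iff, nsmul_eq_mul]

lemma mem_closure_pair {n : ℕ} [NeZero n] (a c g : ZMod n × ZMod n) (α β : ZMod n)
    (h : g = α.val • a + β.val • c) : g ∈ AddSubgroup.closure {a, c} := by
  rw [h]
  exact add_mem (nsmul_mem (AddSubgroup.subset_closure (by simp)) _)
    (nsmul_mem (AddSubgroup.subset_closure (by simp)) _)

theorem zmod_sq_admits_unmixed_beauville_structure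
    (n : ℕ) (hn : Nat.gcd n 6 = 1) (hn1 : 1 < n) :
    ∃ a₁ c₁ a₂ c₂ : ZMod n × ZMod n,
      AddSubgroup.closure {a₁, c₁} = ⊤ ∧ AddSubgroup.closure {a₂, c₂} = ⊤ ∧
      beauvilleSigmaAdd (ZMod n × ZMod n) a₁ c₁ ∩
        beauvilleSigmaAdd (ZMod n × ZMod n) a₂ c₂ = {0} := by
  haveI : NeZero n := ⟨by omega⟩
  have hcop : Nat.Coprime n 6 := hn
  have h2 : IsUnit (2 : ZMod n) := by
    rw [show ((2:ZMod n) = ((2:ℕ):ZMod n)) by norm_num, ZMod.isUnit_iff_coprime]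
    exact (Nat.Coprime.coprime_dvd_left (by norm_num) hcop.symm)
  have h3 : IsUnit (3 : ZMod n) := by
    rw [show ((3:ZMod n) = ((3:ℕ):ZMod n)) by norm_num, ZMod.isUnit_iff_coprime]
    exact (Nat.Coprime.coprime_dvd_left (by norm_num) hcop.symm)
  have h2z : ∀ j : ZMod n, 2 * j = 0 → j = 0 := fun j hj => h2.mul_right_eq_zero.mp hj
  refine ⟨(1,0), (0,1), (1,2), (-2,-1), ?_, ?_, ?_⟩
  · rw [eq_top_iff]
    rintro ⟨x, y⟩ -
    refine mem_closure_pair _ _ _ x y ?_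
    simp [smul_pair, Prod.ext_iff, ZMod.natCast_val, ZMod.cast_id]
  · rw [eq_top_iff]
    rintro ⟨x, y⟩ -
    obtain ⟨t, ht⟩ := h3.exists_left_inv
    refine mem_closure_pair _ _ _ (t * (2*y - x)) (t * (y - 2*x)) ?_
    simp only [smul_pair, Prod.ext_iff, ZMod.natCast_val, ZMod.cast_id, Prod.mk_add_mk]
    exact ⟨by linear_combination (-x) * ht, by linear_combination (-y) * ht⟩
  · apply Set.eq_of_subset_of_subset
    · rintro g ⟨hg1, hg2⟩
      simp only [beauvilleSigmaAdd, Set.mem_iUnion, Set.mem_insert_iff,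
        Set.mem_singleton_iff] at hg1 hg2
      obtain ⟨i, hi⟩ := hg1
      obtain ⟨j, hj⟩ := hg2
      simp only [Prod.mk_add_mk, smul_pair, Prod.ext_iff] at hi hj
      norm_num at hi hj
      rcases hi with ⟨h1a, h1b⟩ | ⟨h1a, h1b⟩ | ⟨h1a, h1b⟩ <;>
        rcases hj with ⟨h2a, h2b⟩ | ⟨h2a, h2b⟩ | ⟨h2a, h2b⟩ <;>
        · simp only [Set.mem_singleton_iff, Prod.ext_iff]
          have hJ : (j:ZMod n) = 0 := by
            apply h2z
            first
            | linear_combination h1b - h2b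
            | linear_combination 2*h2b - 2*h1b
            | linear_combination 2*h1b - 2*h2b
            | linear_combination 2*h1a - 2*h2a
            | linear_combination h2a - h1a
            | linear_combination 2*h2a - 2*h1a
            | linear_combination -2*h1a + 2*h1b + 2*h2a - 2*h2b
            | linear_combination -h1a + h1b + h2a - h2b
          exact ⟨by rw [h2a]; simp [hJ], by rw [h2b]; simp [hJ]⟩
    · rintro g hg
      simp only [Set.mem_singleton_iff] at hg
      subst hg
      constructor <;>
      · simp only [beauvilleSigmaAdd, Set.mem_iUnion, Set.mem_insert_iff, Set.mem_singleton_iff]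
        exact ⟨0, Or.inl (by simp)⟩
end

section
/- Let G be a finite group admitting a mixed Beauville quadruple (G⁰; a, c; g). Then every element of G ∖ G⁰ has order divisible by 4. In particular G has no element of order 2 outside G⁰ and 4 divides |G|. -/
/-- For a subgroup `G⁰ ≤ G` and `a c : G`, `Σ(a,c)` is the union over all `h ∈ G⁰`
and all `i ≥ 0` of the conjugates `h a^i h⁻¹`, `h c^i h⁻¹`, `h (ac)^i h⁻¹`. -/
def mixedSigma {G : Type*} [Group G] (G0 : Subgroup G) (a c : G) : Set G :=
  ⋃ h ∈ G0, ⋃ i : ℕ, {h * a ^ i * h⁻¹, h * c ^ i * h⁻¹, h * (a * c) ^ i * h⁻¹}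

lemma one_mem_mixedSigma {G : Type*} [Group G] (G0 : Subgroup G) (a c : G) :
    (1 : G) ∈ mixedSigma G0 a c := by
  refine Set.mem_biUnion (G0.one_mem) ?_
  refine Set.mem_iUnion.2 ⟨0, ?_⟩
  simp

theorem mixed_beauville_order_outside_divisible_by_four
    (G : Type*) [Group G] [Finite G] (G0 : Subgroup G) (a c g : G)
    (hindex : G0.index = 2)
    (ha : a ∈ G0) (hc : c ∈ G0)
    (hgen : Subgroup.closure {a, c} = G0)
    (hg : g ∉ G0)
    (hsquare : ∀ γ ∈ G0, g * γ * g * γ ∉ mixedSigma G0 a c)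
    (hdisjoint : mixedSigma G0 a c ∩ mixedSigma G0 (g * a * g⁻¹) (g * c * g⁻¹) = {1}) :
    (∀ x : G, x ∉ G0 → 4 ∣ orderOf x) ∧
    (∀ x : G, x ∉ G0 → orderOf x ≠ 2) ∧
    4 ∣ Nat.card G := by
  -- key: no element outside G0 squares to 1
  have key : ∀ x : G, x ∉ G0 → x * x ≠ 1 := by
    intro x hx hxx
    have hγ : g⁻¹ * x ∈ G0 := by
      rw [Subgroup.mul_mem_iff_of_index_two hindex]
      simp [hx, hg]
    have := hsquare (g⁻¹ * x) hγ
    have heq : g * (g⁻¹ * x) * g * (g⁻¹ * x) = x * x := by group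
    rw [heq, hxx] at this
    exact this (one_mem_mixedSigma G0 a c)
  -- odd powers stay outside G0
  have hodd : ∀ x : G, x ∉ G0 → ∀ m : ℕ, Odd m → x ^ m ∉ G0 := by
    intro x hx m ⟨k, hk⟩ hmem
    apply hx
    have h2 : (x ^ 2) ^ k ∈ G0 := G0.pow_mem (Subgroup.sq_mem_of_index_two hindex x) k
    have : x ^ m = (x ^ 2) ^ k * x := by
      rw [← pow_mul, ← pow_succ, hk]
    rw [this] at hmem
    have := G0.mul_mem (G0.inv_mem h2) hmem
    rwa [inv_mul_cancel_left] at this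
  have main : ∀ x : G, x ∉ G0 → 4 ∣ orderOf x := by
    intro x hx
    have hpos : 0 < orderOf x := orderOf_pos x
    -- order is even
    have heven : 2 ∣ orderOf x := by
      by_contra hodd'
      have : Odd (orderOf x) := Nat.odd_iff.2 (Nat.two_dvd_ne_zero.mp hodd')
      have := hodd x hx (orderOf x) this
      rw [pow_orderOf_eq_one] at this
      exact this G0.one_mem
    obtain ⟨m, hm⟩ := heven
    -- m must be even
    rcases Nat.even_or_odd m with hme | hmo
    · obtain ⟨k, hk⟩ := hme
      exact ⟨k, by omega⟩
    · exfalso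
      have hxm : x ^ m ∉ G0 := hodd x hx m hmo
      apply key (x ^ m) hxm
      rw [← pow_add, ← two_mul, ← hm, pow_orderOf_eq_one]
  refine ⟨main, ?_, ?_⟩
  · intro x hx h2
    have := main x hx
    rw [h2] at this
    omega
  · exact dvd_trans (main g hg) (orderOf_dvd_natCard g)
end

section
/- Let V be a q-dimensional complex vector space with q ≥ 2, and let W ⊆ Λ²V be a linear subspace with dim W ≥ C(q,2) − (2q−4), where C(q,2) = q(q−1)/2 (equivalently, codim W ≤ 2q−4). Then W contains a nonzero decomposable element, i.e. there exist linearly independent v, w ∈ V with v ∧ w ∈ W. -/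
open MvPolynomial

namespace BeauvilleAux

/-! ### Polynomial setup -/

variable {q r : ℕ}

/-- Polynomial ring in the coordinates of a pair of vectors. -/
abbrev R (q : ℕ) := MvPolynomial (Fin q ⊕ Fin q) ℂ

/-- Polynomial ring in Plücker coordinates. -/
abbrev S (q : ℕ) := MvPolynomial (Fin q × Fin q) ℂ

/-- Plücker coordinate polynomials. -/
noncomputable def Pm (ik : Fin q × Fin q) : R q :=
  X (.inl ik.1) * X (.inr ik.2) - X (.inl ik.2) * X (.inr ik.1)

lemma Pm_homog (ik : Fin q × Fin q) : (Pm ik).IsHomogeneous 2 := by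
  apply MvPolynomial.IsHomogeneous.sub <;>
    exact (isHomogeneous_X _ _).mul (isHomogeneous_X _ _)

/-- Monomials in the Plücker coordinates. -/
noncomputable def Mon (d : Fin q × Fin q →₀ ℕ) : R q :=
  d.prod fun ik n => Pm ik ^ n

lemma Mon_add (d e : Fin q × Fin q →₀ ℕ) : Mon (d + e) = Mon d * Mon e :=
  Finsupp.prod_add_index' (fun _ => pow_zero _) (fun _ _ _ => pow_add _ _ _)

lemma Mon_single (ik : Fin q × Fin q) (n : ℕ) : Mon (Finsupp.single ik n) = Pm ik ^ n :=
  Finsupp.prod_single_index (pow_zero _)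

lemma Mon_homog (d : Fin q × Fin q →₀ ℕ) : (Mon d).IsHomogeneous (2 * d.degree) := by
  rw [Finsupp.degree_apply, Finset.mul_sum]
  exact MvPolynomial.IsHomogeneous.prod _ _ _ fun ik _ => (Pm_homog ik).pow _

/-! ### Finsupp degree helpers -/

lemma degree_univ {ι : Type*} [Fintype ι] (d : ι →₀ ℕ) : d.degree = ∑ a : ι, d a := by
  rw [Finsupp.degree]
  exact Finset.sum_subset (Finset.subset_univ _)
    (fun x _ hx => Finsupp.notMem_support_iff.mp hx)

lemma degree_add' {ι : Type*} [Fintype ι] (d e : ι →₀ ℕ) :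
    (d + e).degree = d.degree + e.degree := by
  simp [degree_univ, Finset.sum_add_distrib]

lemma degree_single' {ι : Type*} [Fintype ι] [DecidableEq ι] (a : ι) (n : ℕ) :
    (Finsupp.single a n).degree = n := by
  rw [degree_univ]
  simp [Finsupp.single_apply]

lemma degree_zero' {ι : Type*} : (0 : ι →₀ ℕ).degree = 0 := by
  simp [Finsupp.degree]

/-! ### Homogeneous component helpers -/

section HomComp
variable {σ : Type*} {p : MvPolynomial σ ℂ} {k n : ℕ}

lemma homComp_eq_self (h : p.IsHomogeneous n) : homogeneousComponent n p = p := by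
  ext d
  rw [coeff_homogeneousComponent]
  split_ifs with hd
  · rfl
  · exact (h.coeff_eq_zero hd).symm

lemma homComp_eq_zero_of_ne (h : p.IsHomogeneous k) (hkn : k ≠ n) :
    homogeneousComponent n p = 0 := by
  ext d
  rw [coeff_homogeneousComponent]
  split_ifs with hd
  · rw [coeff_zero]
    exact h.coeff_eq_zero (by rw [hd]; exact fun hc => hkn hc.symm)
  · rw [coeff_zero]

lemma homComp_mul_homog (a h : MvPolynomial σ ℂ) (hh : h.IsHomogeneous 2) (n : ℕ) :
    homogeneousComponent (n + 2) (a * h) = homogeneousComponent n a * h := by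
  conv_lhs => rw [← MvPolynomial.sum_homogeneousComponent a]
  rw [Finset.sum_mul, map_sum]
  by_cases hn : n ≤ a.totalDegree
  · rw [Finset.sum_eq_single n]
    · exact homComp_eq_self (((homogeneousComponent_isHomogeneous n a)).mul hh)
    · intro i _ hi
      exact homComp_eq_zero_of_ne (((homogeneousComponent_isHomogeneous i a)).mul hh)
        (by omega)
    · intro hn'
      simp at hn'
      omega
  · push_neg at hn
    rw [homogeneousComponent_eq_zero n a hn, zero_mul]
    apply Finset.sum_eq_zero
    intro i hi
    simp only [Finset.mem_range] at hi
    exact homComp_eq_zero_of_ne (((homogeneousComponent_isHomogeneous i a)).mul hh)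
      (by omega)

end HomComp

/-! ### The ideal and its generators -/

/-- Generators of the ideal: Plücker relations and the linear conditions. -/
noncomputable def gen (β : Fin r → Fin q × Fin q → ℂ) :
    ((Fin q × Fin q) × Fin q × Fin q) ⊕ Fin r → S q
  | .inl ⟨⟨i, j⟩, k, l⟩ =>
      X (i, j) * X (k, l) - X (i, k) * X (j, l) + X (i, l) * X (j, k)
  | .inr j => ∑ ik : Fin q × Fin q, C (β j ik) * X ik

/-- Substituting the Plücker polynomials of a pair of vectors. -/
noncomputable def psi : S q →ₐ[ℂ] R q := aeval Pm

lemma psi_gen_inl (β : Fin r → Fin q × Fin q → ℂ) (t : (Fin q × Fin q) × Fin q × Fin q) :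
    psi (gen β (.inl t)) = 0 := by
  obtain ⟨⟨i, j⟩, k, l⟩ := t
  simp only [gen, psi, map_add, map_sub, map_mul, aeval_X, Pm]
  ring

/-- The image of the linear generators. -/
noncomputable def Lf (β : Fin r → Fin q × Fin q → ℂ) (j : Fin r) : R q :=
  ∑ ik : Fin q × Fin q, C (β j ik) * Pm ik

lemma psi_gen_inr (β : Fin r → Fin q × Fin q → ℂ) (j : Fin r) :
    psi (gen β (.inr j)) = Lf β j := by
  simp only [gen, psi, map_sum, map_mul, aeval_X, aeval_C, Lf, algebraMap_eq]

lemma Lf_homog (β : Fin r → Fin q × Fin q → ℂ) (j : Fin r) : (Lf β j).IsHomogeneous 2 := by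
  apply MvPolynomial.IsHomogeneous.sum
  intro ik _
  simpa using (isHomogeneous_C _ (β j ik)).mul (Pm_homog ik)

/-- If there is no solution, the zero locus of the ideal is trivial. -/
lemma zeroLocus_subset (β : Fin r → Fin q × Fin q → ℂ)
    (noSol : ∀ v w : Fin q → ℂ,
      (∀ j : Fin r, ∑ ik : Fin q × Fin q, β j ik * (v ik.1 * w ik.2 - v ik.2 * w ik.1) = 0) →
      ∀ ik : Fin q × Fin q, v ik.1 * w ik.2 - v ik.2 * w ik.1 = 0)
    (x : Fin q × Fin q → ℂ) (hx : x ∈ zeroLocus ℂ (Ideal.span (Set.range (gen β)))) :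
    x = 0 := by
  by_contra hx0
  have hgen : ∀ t, eval x (gen β t) = 0 := fun t =>
    mem_zeroLocus_iff.mp hx _ (Ideal.subset_span ⟨t, rfl⟩)
  have : ∃ ab : Fin q × Fin q, x ab ≠ 0 := by
    by_contra h
    push_neg at h
    exact hx0 (funext fun ik => h ik)
  obtain ⟨⟨a, b⟩, hab⟩ := this
  set v : Fin q → ℂ := fun i => x (i, a) with hv
  set w : Fin q → ℂ := fun i => x (i, b) * (x (a, b))⁻¹ with hw
  have hpluck : ∀ i k : Fin q,
      x (i, k) * x (a, b) - x (i, a) * x (k, b) + x (i, b) * x (k, a) = 0 := by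
    intro i k
    have := hgen (.inl ⟨⟨i, k⟩, a, b⟩)
    simpa [gen] using this
  have hminor : ∀ ik : Fin q × Fin q, v ik.1 * w ik.2 - v ik.2 * w ik.1 = x ik := by
    rintro ⟨i, k⟩
    have h := hpluck i k
    have e1 : v i * w k - v k * w i
        = (x (i,a) * x (k,b) - x (k,a) * x (i,b)) * (x (a,b))⁻¹ := by
      simp only [hv, hw]; ring
    have e2 : x (i,a) * x (k,b) - x (k,a) * x (i,b) = x (i,k) * x (a,b) := by
      linear_combination -h
    rw [e1, e2, mul_assoc, mul_inv_cancel₀ hab, mul_one]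
  have hlin : ∀ j : Fin r,
      ∑ ik : Fin q × Fin q, β j ik * (v ik.1 * w ik.2 - v ik.2 * w ik.1) = 0 := by
    intro j
    have := hgen (.inr j)
    simp only [gen, map_sum, map_mul, eval_C, eval_X] at this
    calc ∑ ik : Fin q × Fin q, β j ik * (v ik.1 * w ik.2 - v ik.2 * w ik.1)
        = ∑ ik : Fin q × Fin q, β j ik * x ik := by
          exact Finset.sum_congr rfl fun ik _ => by rw [hminor]
      _ = 0 := this
  have := noSol v w hlin ⟨a, b⟩
  rw [hminor] at this
  exact hab this

/-! ### Monomial spans -/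

/-- Plücker monomials of a fixed length. -/
def MonSet (q : ℕ) (m : ℕ) : Set (R q) :=
  {x | ∃ d : Fin q × Fin q →₀ ℕ, d.degree = m ∧ x = Mon d}

lemma homComp_psi_mem (b : S q) (m : ℕ) :
    homogeneousComponent (2 * m) (psi b) ∈ Submodule.span ℂ (MonSet q m) := by
  have hpsi : psi b = ∑ d ∈ b.support, coeff d b • Mon d := by
    conv_lhs => rw [as_sum b]
    rw [map_sum]
    refine Finset.sum_congr rfl fun d _ => ?_
    rw [psi, aeval_monomial, MvPolynomial.algebraMap_eq, Mon, smul_eq_C_mul]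
  rw [hpsi, map_sum]
  apply Submodule.sum_mem
  intro d _
  rw [map_smul]
  by_cases hd : d.degree = m
  · rw [homComp_eq_self (by rw [← hd]; exact Mon_homog d)]
    exact Submodule.smul_mem _ _ (Submodule.subset_span ⟨d, hd, rfl⟩)
  · rw [homComp_eq_zero_of_ne (Mon_homog d) (by omega), smul_zero]
    exact Submodule.zero_mem _

/-! ### The key relation from the Nullstellensatz -/

lemma key_relation (β : Fin r → Fin q × Fin q → ℂ)
    (noSol : ∀ v w : Fin q → ℂ,
      (∀ j : Fin r, ∑ ik : Fin q × Fin q, β j ik * (v ik.1 * w ik.2 - v ik.2 * w ik.1) = 0) →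
      ∀ ik : Fin q × Fin q, v ik.1 * w ik.2 - v ik.2 * w ik.1 = 0) :
    ∃ M : ℕ, 1 ≤ M ∧ ∀ α : Fin q × Fin q, ∃ c : Fin r → R q,
      (∀ j, c j ∈ Submodule.span ℂ (MonSet q (M - 1))) ∧
      Pm α ^ M = ∑ j : Fin r, c j * Lf β j := by
  classical
  set J : Ideal (S q) := Ideal.span (Set.range (gen β)) with hJ
  -- each coordinate has a power in J
  have hrad : ∀ α : Fin q × Fin q, ∃ n : ℕ, (X α : S q) ^ n ∈ J := by
    intro α
    have hXv : (X α : S q) ∈ vanishingIdeal ℂ (zeroLocus ℂ J) := by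
      rw [mem_vanishingIdeal_iff]
      intro x hx
      rw [zeroLocus_subset β noSol x hx]
      simp
    rw [vanishingIdeal_zeroLocus_eq_radical] at hXv
    exact Ideal.mem_radical_iff.mp hXv
  choose Mf hMf using hrad
  set M : ℕ := (Finset.univ.sup Mf) + 1 with hMdef
  refine ⟨M, le_add_self, fun α => ?_⟩
  have hXM : (X α : S q) ^ M ∈ J := by
    have hle : Mf α ≤ M := le_trans (Finset.le_sup (Finset.mem_univ α)) (Nat.le_succ _)
    have : (X α : S q) ^ M = X α ^ (M - Mf α) * X α ^ Mf α := by
      rw [← pow_add]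
      congr 1
      omega
    rw [this]
    exact Ideal.mul_mem_left _ _ (hMf α)
  rw [hJ, Ideal.mem_span_range_iff_exists_fun] at hXM
  obtain ⟨u, hu⟩ := hXM
  -- apply psi
  have hpsi : Pm α ^ M = ∑ j : Fin r, psi (u (.inr j)) * Lf β j := by
    have := congrArg (psi (q := q)) hu
    rw [map_sum, map_pow] at this
    simp only [map_mul] at this
    rw [Fintype.sum_sum_type] at this
    have hzero : ∀ t ∈ (Finset.univ : Finset ((Fin q × Fin q) × Fin q × Fin q)),
        psi (u (.inl t)) * psi (gen β (.inl t)) = 0 := fun t _ => by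
      rw [psi_gen_inl, mul_zero]
    rw [Finset.sum_eq_zero hzero, zero_add] at this
    have hX : psi (X α : S q) = Pm α := by rw [psi, aeval_X]
    rw [hX] at this
    rw [← this]
    exact Finset.sum_congr rfl fun j _ => by rw [psi_gen_inr]
  -- extract homogeneous components
  refine ⟨fun j => homogeneousComponent (2 * (M - 1)) (psi (u (.inr j))),
    fun j => homComp_psi_mem _ _, ?_⟩
  have h2M : 2 * M = 2 * (M - 1) + 2 := by omega
  calc Pm α ^ M = homogeneousComponent (2 * M) (Pm α ^ M) := by
        rw [homComp_eq_self (by simpa [mul_comm] using (Pm_homog α).pow M)]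
    _ = ∑ j : Fin r,
        homogeneousComponent (2 * (M - 1)) (psi (u (.inr j))) * Lf β j := by
        rw [hpsi, map_sum]
        refine Finset.sum_congr rfl fun j _ => ?_
        rw [h2M, homComp_mul_homog _ _ (Lf_homog β j)]

/-! ### The span induction -/

/-- Monomials in the linear forms. -/
noncomputable def LMon (β : Fin r → Fin q × Fin q → ℂ) (g : Fin r →₀ ℕ) : R q :=
  g.prod fun j n => Lf β j ^ n

lemma LMon_add (β : Fin r → Fin q × Fin q → ℂ) (g h : Fin r →₀ ℕ) :
    LMon β (g + h) = LMon β g * LMon β h :=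
  Finsupp.prod_add_index' (fun _ => pow_zero _) (fun _ _ _ => pow_add _ _ _)

lemma LMon_single (β : Fin r → Fin q × Fin q → ℂ) (j : Fin r) (n : ℕ) :
    LMon β (Finsupp.single j n) = Lf β j ^ n :=
  Finsupp.prod_single_index (pow_zero _)

/-- The spanning set: products of linear-form monomials with short Plücker monomials. -/
def BSet (β : Fin r → Fin q × Fin q → ℂ) (s m : ℕ) : Set (R q) :=
  {x | ∃ (g : Fin r →₀ ℕ) (d : Fin q × Fin q →₀ ℕ),
    g.degree + d.degree = m ∧ d.degree < s ∧ x = LMon β g * Mon d}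

lemma cl_induction (β : Fin r → Fin q × Fin q → ℂ) (M : ℕ) (hM : 1 ≤ M)
    (hrel : ∀ α : Fin q × Fin q, ∃ c : Fin r → R q,
      (∀ j, c j ∈ Submodule.span ℂ (MonSet q (M - 1))) ∧
      Pm α ^ M = ∑ j : Fin r, c j * Lf β j) :
    ∀ m : ℕ, ∀ d : Fin q × Fin q →₀ ℕ, d.degree = m →
      Mon d ∈ Submodule.span ℂ
        (BSet β (Fintype.card (Fin q × Fin q) * (M - 1) + 1) m) := by
  classical
  set s : ℕ := Fintype.card (Fin q × Fin q) * (M - 1) + 1 with hs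
  intro m
  induction m using Nat.strong_induction_on with
  | _ m IH =>
    intro d hd
    by_cases hms : m < s
    · -- short monomials are in the spanning set themselves
      apply Submodule.subset_span
      exact ⟨0, d, by rw [degree_zero', hd, zero_add], by omega,
        by rw [LMon, Finsupp.prod_zero_index, one_mul]⟩
    · push_neg at hms
      -- pigeonhole: some exponent is at least M
      have hα : ∃ α : Fin q × Fin q, M ≤ d α := by
        by_contra hcon
        push_neg at hcon
        have : d.degree ≤ Fintype.card (Fin q × Fin q) * (M - 1) := by
          rw [degree_univ]
          calc ∑ a : Fin q × Fin q, d a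
              ≤ ∑ _a : Fin q × Fin q, (M - 1) :=
                Finset.sum_le_sum fun a _ => by have := hcon a; omega
            _ = Fintype.card (Fin q × Fin q) * (M - 1) := by
                rw [Finset.sum_const, smul_eq_mul, Finset.card_univ]
        omega
      obtain ⟨α, hMα⟩ := hα
      have hMm : M ≤ m := by
        have : d α ≤ d.degree := by
          rw [degree_univ]
          exact Finset.single_le_sum (fun _ _ => Nat.zero_le _) (Finset.mem_univ α)
        omega
      set d' : Fin q × Fin q →₀ ℕ := d - Finsupp.single α M with hd'
      have hsplit : d = Finsupp.single α M + d' := by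
        ext y
        simp only [hd', Finsupp.add_apply, Finsupp.tsub_apply, Finsupp.single_apply]
        split_ifs with h
        · subst h; omega
        · omega
      have hdeg' : d'.degree = m - M := by
        have := degree_add' (Finsupp.single α M) d'
        rw [← hsplit, hd, degree_single'] at this
        omega
      obtain ⟨c, hc, hrelα⟩ := hrel α
      have hMon : Mon d = ∑ j : Fin r, c j * (Lf β j * Mon d') := by
        rw [hsplit, Mon_add, Mon_single, hrelα, Finset.sum_mul]
        exact Finset.sum_congr rfl fun j _ => by ring
      rw [hMon]
      apply Submodule.sum_mem
      intro j _
      -- c j is a combination of monomials of length M-1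
      have hcj := hc j
      have hmap : c j * (Lf β j * Mon d') ∈
          Submodule.map (LinearMap.mulRight ℂ (Lf β j * Mon d'))
            (Submodule.span ℂ (MonSet q (M - 1))) :=
        ⟨c j, hcj, rfl⟩
      rw [Submodule.map_span] at hmap
      refine Submodule.span_le.mpr ?_ hmap
      rintro x ⟨y, ⟨e, he, rfl⟩, rfl⟩
      -- x = Mon e * (Lf j * Mon d')
      simp only [LinearMap.mulRight_apply, SetLike.mem_coe]
      have hx : Mon e * (Lf β j * Mon d') = Lf β j * Mon (e + d') := by
        rw [Mon_add]; ring
      rw [hx]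
      -- Mon (e + d') has length m - 1, apply IH, then multiply by Lf j
      have hlen : (e + d').degree = m - 1 := by
        rw [degree_add', he, hdeg']
        omega
      have hm1 : m - 1 < m := by omega
      have hIH := IH (m - 1) hm1 (e + d') hlen
      have hmap2 : Lf β j * Mon (e + d') ∈
          Submodule.map (LinearMap.mulLeft ℂ (Lf β j))
            (Submodule.span ℂ (BSet β s (m - 1))) :=
        ⟨Mon (e + d'), hIH, rfl⟩
      rw [Submodule.map_span] at hmap2
      refine Submodule.span_le.mpr ?_ hmap2
      rintro z ⟨y2, ⟨g2, d2, hgd2, hd2, rfl⟩, rfl⟩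
      simp only [LinearMap.mulLeft_apply, SetLike.mem_coe]
      apply Submodule.subset_span
      refine ⟨g2 + Finsupp.single j 1, d2, ?_, hd2, ?_⟩
      · rw [degree_add', degree_single']
        omega
      · rw [LMon_add, LMon_single, pow_one]
        ring


/-! ### Sum helpers for monomials -/

lemma degree_sum' {ι κ' : Type*} [Fintype κ'] (t : Finset ι) (f : ι → κ' →₀ ℕ) :
    (∑ z ∈ t, f z).degree = ∑ z ∈ t, (f z).degree := by
  classical
  induction t using Finset.cons_induction with
  | empty => simp [degree_zero']
  | cons a t ha IH => rw [Finset.sum_cons, Finset.sum_cons, degree_add', IH]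

lemma Mon_zero : Mon (q := q) 0 = 1 := Finsupp.prod_zero_index

lemma Mon_sum {ι : Type*} (t : Finset ι) (f : ι → Fin q × Fin q) (n : ι → ℕ) :
    Mon (∑ z ∈ t, Finsupp.single (f z) (n z)) = ∏ z ∈ t, Pm (f z) ^ n z := by
  classical
  induction t using Finset.cons_induction with
  | empty => simp [Mon_zero]
  | cons a t ha IH => rw [Finset.sum_cons, Finset.prod_cons, Mon_add, Mon_single, IH]

/-- products of powers of variables -/
noncomputable def XP (E : (Fin q ⊕ Fin q) →₀ ℕ) : R q :=
  E.prod fun i n => X i ^ n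

lemma XP_eq_monomial (E : (Fin q ⊕ Fin q) →₀ ℕ) : XP E = monomial E 1 := by
  rw [monomial_eq, C_1, one_mul, XP]

lemma XP_add (E F : (Fin q ⊕ Fin q) →₀ ℕ) : XP (E + F) = XP E * XP F :=
  Finsupp.prod_add_index' (fun _ => pow_zero _) (fun _ _ _ => pow_add _ _ _)

lemma XP_single (i : Fin q ⊕ Fin q) (n : ℕ) : XP (Finsupp.single i n) = X i ^ n :=
  Finsupp.prod_single_index (pow_zero _)

lemma XP_sum {ι : Type*} (t : Finset ι) (f : ι → Fin q ⊕ Fin q) (n : ι → ℕ) :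
    XP (∑ z ∈ t, Finsupp.single (f z) (n z)) = ∏ z ∈ t, X (f z) ^ n z := by
  classical
  induction t using Finset.cons_induction with
  | empty => simp [XP, Finsupp.prod_zero_index]
  | cons a t ha IH => rw [Finset.sum_cons, Finset.prod_cons, XP_add, XP_single, IH]

/-! ### The substitution χ -/

/-- substitution sending Plücker monomials to signed monomials -/
noncomputable def subst : Fin q ⊕ Fin q → R q
  | .inl i => if i.val = 1 then 0 else X (.inl i)
  | .inr i => if i.val = 0 then 0 else if i.val = 1 then 1 else X (.inr i)

noncomputable def chi : R q →ₐ[ℂ] R q := aeval subst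

/-! ### Concrete indices (for `q = q0 + 3`) -/

section Indices

variable {q0 : ℕ}

def i0 : Fin (q0 + 3) := ⟨0, by omega⟩
def i1 : Fin (q0 + 3) := ⟨1, by omega⟩
def fz (j : Fin (q0 + 1)) : Fin (q0 + 3) := ⟨j.val + 2, by omega⟩

lemma fz_inj : Function.Injective (fz (q0 := q0)) := by
  intro a b h
  have := congrArg Fin.val h
  simp only [fz] at this
  exact Fin.ext (by omega)

/-- the distinguished 2q-3 Plücker indices -/
def prZ : Fin (q0 + 1) ⊕ Fin (q0 + 1) → Fin (q0 + 3) × Fin (q0 + 3) :=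
  Sum.elim (fun j => (i0, fz j)) (fun u => (i1, fz u))

lemma chi_Pm_p0 : chi (Pm (i0 (q0 := q0), i1)) = X (.inl i0) := by
  simp only [chi, Pm, subst, map_sub, map_mul, aeval_X]
  norm_num [i0, i1]

lemma chi_Pm_a (j : Fin (q0 + 1)) :
    chi (Pm (i0 (q0 := q0), fz j)) = X (.inl i0) * X (.inr (fz j)) := by
  simp only [chi, Pm, subst, map_sub, map_mul, aeval_X]
  norm_num [i0, fz]
  exact if_neg (by omega)

lemma chi_Pm_b (u : Fin (q0 + 1)) :
    chi (Pm (i1 (q0 := q0), fz u)) = - X (.inl (fz u)) := by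
  simp only [chi, Pm, subst, map_sub, map_mul, aeval_X]
  norm_num [i1, fz]
  exact if_neg (by omega)

end Indices

/-! ### The independent family -/

section Family

variable {q0 : ℕ}

/-- exponents of the distinguished Plücker monomials -/
noncomputable def Dex (m : ℕ) (hv : Fin (q0 + 1) ⊕ Fin (q0 + 1) → ℕ) :
    (Fin (q0 + 3) × Fin (q0 + 3)) →₀ ℕ :=
  Finsupp.single (i0, i1) (m - ∑ z, hv z) + ∑ z, Finsupp.single (prZ z) (hv z)

lemma Dex_degree (m : ℕ) (hv : Fin (q0 + 1) ⊕ Fin (q0 + 1) → ℕ)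
    (hm : ∑ z, hv z ≤ m) : (Dex m hv).degree = m := by
  rw [Dex, degree_add', degree_single', degree_sum']
  have : ∀ z, (Finsupp.single (prZ (q0 := q0) z) (hv z)).degree = hv z :=
    fun z => degree_single' _ _
  rw [Finset.sum_congr rfl fun z _ => this z]
  exact (by omega : (m - ∑ z, hv z) + ∑ z, hv z = m)

lemma Mon_Dex (m : ℕ) (hv : Fin (q0 + 1) ⊕ Fin (q0 + 1) → ℕ) :
    Mon (Dex m hv) = Pm (i0, i1) ^ (m - ∑ z, hv z) * ∏ z, Pm (prZ z) ^ hv z := by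
  rw [Dex, Mon_add, Mon_single, Mon_sum]

/-- exponents of the image monomials under χ -/
noncomputable def EEx (m : ℕ) (hv : Fin (q0 + 1) ⊕ Fin (q0 + 1) → ℕ) :
    (Fin (q0 + 3) ⊕ Fin (q0 + 3)) →₀ ℕ :=
  Finsupp.single (.inl i0) ((m - ∑ z, hv z) + ∑ j : Fin (q0 + 1), hv (.inl j))
  + ∑ j : Fin (q0 + 1), Finsupp.single (.inr (fz j)) (hv (.inl j))
  + ∑ u : Fin (q0 + 1), Finsupp.single (.inl (fz u)) (hv (.inr u))

lemma chi_Mon_Dex (m : ℕ) (hv : Fin (q0 + 1) ⊕ Fin (q0 + 1) → ℕ) :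
    chi (Mon (Dex m hv))
      = ((-1 : ℂ) ^ (∑ u : Fin (q0 + 1), hv (.inr u))) • monomial (EEx m hv) 1 := by
  rw [Mon_Dex, map_mul, map_pow, chi_Pm_p0, map_prod]
  rw [Fintype.prod_sum_type]
  simp only [map_pow]
  have ha : ∀ j : Fin (q0 + 1), chi (Pm (prZ (q0 := q0) (.inl j))) ^ hv (.inl j)
      = X (.inl i0) ^ hv (.inl j) * X (.inr (fz j)) ^ hv (.inl j) := by
    intro j
    have : prZ (q0 := q0) (.inl j) = (i0, fz j) := rfl
    rw [this, chi_Pm_a, mul_pow]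
  have hb : ∀ u : Fin (q0 + 1), chi (Pm (prZ (q0 := q0) (.inr u))) ^ hv (.inr u)
      = (-1 : R (q0 + 3)) ^ hv (.inr u) * X (.inl (fz u)) ^ hv (.inr u) := by
    intro u
    have : prZ (q0 := q0) (.inr u) = (i1, fz u) := rfl
    rw [this, chi_Pm_b, neg_pow]
  rw [Finset.prod_congr rfl fun j _ => ha j, Finset.prod_congr rfl fun u _ => hb u]
  rw [Finset.prod_mul_distrib, Finset.prod_mul_distrib,
    Finset.prod_pow_eq_pow_sum, Finset.prod_pow_eq_pow_sum]
  -- right-hand side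
  rw [← XP_eq_monomial, EEx, XP_add, XP_add, XP_single, XP_sum, XP_sum]
  have hsm : ((-1 : ℂ) ^ (∑ u : Fin (q0 + 1), hv (.inr u))) •
      (X (Sum.inl (i0 : Fin (q0 + 3))) ^ ((m - ∑ z, hv z) + ∑ j : Fin (q0 + 1), hv (.inl j)) *
        (∏ j : Fin (q0 + 1), X (Sum.inr (fz j)) ^ hv (.inl j)) *
        ∏ u : Fin (q0 + 1), X (Sum.inl (fz u)) ^ hv (.inr u))
      = ((C (-1 : ℂ)) ^ (∑ u : Fin (q0 + 1), hv (.inr u))) *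
      (X (Sum.inl (i0 : Fin (q0 + 3))) ^ ((m - ∑ z, hv z) + ∑ j : Fin (q0 + 1), hv (.inl j)) *
        (∏ j : Fin (q0 + 1), X (Sum.inr (fz j)) ^ hv (.inl j)) *
        ∏ u : Fin (q0 + 1), X (Sum.inl (fz u)) ^ hv (.inr u)) := by
    rw [smul_eq_C_mul, map_pow]
  rw [hsm, map_neg, C_1]
  ring

lemma EEx_apply_a (m : ℕ) (hv : Fin (q0 + 1) ⊕ Fin (q0 + 1) → ℕ) (j : Fin (q0 + 1)) :
    (EEx m hv) (.inr (fz j)) = hv (.inl j) := by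
  classical
  simp only [EEx, Finsupp.add_apply, Finsupp.finset_sum_apply, Finsupp.single_apply]
  rw [if_neg (by simp)]
  have h2 : (∑ j' : Fin (q0 + 1),
      if (Sum.inr (fz j') : Fin (q0+3) ⊕ Fin (q0+3)) = Sum.inr (fz j)
        then hv (.inl j') else 0) = hv (.inl j) := by
    have : ∀ j' : Fin (q0 + 1),
        ((Sum.inr (fz j') : Fin (q0+3) ⊕ Fin (q0+3)) = Sum.inr (fz j)) ↔ j' = j := by
      intro j'
      simp [fz_inj.eq_iff]
    rw [Finset.sum_congr rfl fun j' _ => by rw [if_congr (this j') rfl rfl]]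
    simp
  rw [h2]
  have h3 : (∑ u : Fin (q0 + 1),
      if (Sum.inl (fz u) : Fin (q0+3) ⊕ Fin (q0+3)) = Sum.inr (fz j)
        then hv (.inr u) else 0) = 0 := by
    apply Finset.sum_eq_zero
    intro u _
    rw [if_neg (by simp)]
  rw [h3]
  omega

lemma EEx_apply_b (m : ℕ) (hv : Fin (q0 + 1) ⊕ Fin (q0 + 1) → ℕ) (u : Fin (q0 + 1)) :
    (EEx m hv) (.inl (fz u)) = hv (.inr u) := by
  classical
  simp only [EEx, Finsupp.add_apply, Finsupp.finset_sum_apply, Finsupp.single_apply]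
  rw [if_neg (by
    simp only [Sum.inl.injEq]
    intro h
    have := congrArg Fin.val h
    simp [i0, fz] at this)]
  have h2 : (∑ j' : Fin (q0 + 1),
      if (Sum.inr (fz j') : Fin (q0+3) ⊕ Fin (q0+3)) = Sum.inl (fz u)
        then hv (.inl j') else 0) = 0 := by
    apply Finset.sum_eq_zero
    intro j' _
    rw [if_neg (by simp)]
  rw [h2]
  have h3 : (∑ u' : Fin (q0 + 1),
      if (Sum.inl (fz u') : Fin (q0+3) ⊕ Fin (q0+3)) = Sum.inl (fz u)
        then hv (.inr u') else 0) = hv (.inr u) := by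
    have : ∀ u' : Fin (q0 + 1),
        ((Sum.inl (fz u') : Fin (q0+3) ⊕ Fin (q0+3)) = Sum.inl (fz u)) ↔ u' = u := by
      intro u'
      simp [fz_inj.eq_iff]
    rw [Finset.sum_congr rfl fun u' _ => by rw [if_congr (this u') rfl rfl]]
    simp
  rw [h3]
  omega

/-- the family of Plücker monomials indexed by bounded exponent functions is
linearly independent -/
lemma family_indep (m K : ℕ) :
    LinearIndependent ℂ (fun h : Fin (q0 + 1) ⊕ Fin (q0 + 1) → Fin (K + 1) =>
      Mon (Dex m (fun z => (h z).val))) := by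
  classical
  apply LinearIndependent.of_comp (chi (q := q0 + 3)).toLinearMap
  have hcomp : (⇑(chi (q := q0+3)).toLinearMap ∘ fun h : Fin (q0 + 1) ⊕ Fin (q0 + 1) → Fin (K + 1) =>
      Mon (Dex m (fun z => (h z).val)))
      = fun h : Fin (q0 + 1) ⊕ Fin (q0 + 1) → Fin (K + 1) =>
        ((-1 : ℂ) ^ (∑ u : Fin (q0 + 1), ((h (.inr u)).val))) •
          monomial (EEx m (fun z => (h z).val)) (1 : ℂ) := by
    funext h
    simp only [Function.comp_apply, AlgHom.toLinearMap_apply]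
    rw [chi_Mon_Dex]
  rw [hcomp]
  have hinj : Function.Injective
      (fun h : Fin (q0 + 1) ⊕ Fin (q0 + 1) → Fin (K + 1) =>
        EEx m (fun z => (h z).val)) := by
    intro h1 h2 heq
    funext z
    cases z with
    | inl j =>
      have := congrArg (fun E => E (Sum.inr (fz j))) heq
      simp only [EEx_apply_a] at this
      exact Fin.ext this
    | inr u =>
      have := congrArg (fun E => E (Sum.inl (fz u))) heq
      simp only [EEx_apply_b] at this
      exact Fin.ext this
  have li0 : LinearIndependent ℂ
      (fun h : Fin (q0 + 1) ⊕ Fin (q0 + 1) → Fin (K + 1) =>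
        monomial (EEx m (fun z => (h z).val)) (1 : ℂ)) := by
    have := ((basisMonomials (Fin (q0+3) ⊕ Fin (q0+3)) ℂ).linearIndependent).comp _ hinj
    rw [coe_basisMonomials] at this
    exact this
  have hsmul := li0.units_smul (fun h : Fin (q0 + 1) ⊕ Fin (q0 + 1) → Fin (K + 1) =>
    (-1 : ℂˣ) ^ (∑ u : Fin (q0 + 1), ((h (.inr u)).val)))
  have hfun : (fun h : Fin (q0 + 1) ⊕ Fin (q0 + 1) → Fin (K + 1) =>
        ((-1 : ℂ) ^ (∑ u : Fin (q0 + 1), ((h (.inr u)).val))) •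
          monomial (EEx m (fun z => (h z).val)) (1 : ℂ))
      = ((fun h : Fin (q0 + 1) ⊕ Fin (q0 + 1) → Fin (K + 1) =>
          (-1 : ℂˣ) ^ (∑ u : Fin (q0 + 1), ((h (.inr u)).val))) •
        (fun h : Fin (q0 + 1) ⊕ Fin (q0 + 1) → Fin (K + 1) =>
          monomial (EEx m (fun z => (h z).val)) (1 : ℂ))) := by
    funext h
    simp [Pi.smul_apply', Units.smul_def]
  rw [hfun]
  exact hsmul

end Family

/-! ### The core theorem -/

theorem core (q r : ℕ) (hq : 2 ≤ q) (hr : r ≤ 2 * q - 4)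
    (β : Fin r → Fin q × Fin q → ℂ) :
    ∃ v w : Fin q → ℂ,
      (∀ j : Fin r, ∑ ik : Fin q × Fin q, β j ik * (v ik.1 * w ik.2 - v ik.2 * w ik.1) = 0) ∧
      ∃ ik : Fin q × Fin q, v ik.1 * w ik.2 - v ik.2 * w ik.1 ≠ 0 := by
  classical
  by_contra hcon
  push_neg at hcon
  rcases Nat.eq_zero_or_pos r with hr0 | hr1
  · -- no conditions at all: take two coordinate vectors
    set iA : Fin q := ⟨0, by omega⟩
    set iB : Fin q := ⟨1, by omega⟩
    have hAB : iA ≠ iB := by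
      intro h
      have := congrArg Fin.val h
      simp [iA, iB] at this
    have h1 := hcon (fun i => if i = iA then 1 else 0) (fun i => if i = iB then 1 else 0)
      (fun j => absurd j.isLt (by omega)) (iA, iB)
    simp [hAB] at h1
  · have hq3 : 3 ≤ q := by omega
    obtain ⟨q0, rfl⟩ : ∃ q0, q = q0 + 3 := ⟨q - 3, by omega⟩
    obtain ⟨r', rfl⟩ : ∃ r', r = r' + 1 := ⟨r - 1, by omega⟩
    obtain ⟨M, hM1, hrel⟩ := key_relation β hcon
    set N : ℕ := Fintype.card (Fin (q0+3) × Fin (q0+3)) with hN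
    set s : ℕ := N * (M - 1) + 1 with hs
    have hcl := cl_induction β M hM1 hrel
    set d4 : ℕ := 2 * (q0 + 3) - 4 with hd4
    have hd4' : d4 = 2 * q0 + 2 := by omega
    set K : ℕ := d4 ^ (d4 - 1) * s ^ N with hK
    set m : ℕ := d4 * K with hmdef
    -- the spanning family
    set F : (Fin r' → Fin (m+1)) × (Fin (q0+3) × Fin (q0+3) → Fin s) → R (q0+3) :=
      fun gd => LMon β (Finsupp.equivFunOnFinite.symm (Fin.snoc (fun i => (gd.1 i).val)
          (m - (∑ ik, (gd.2 ik).val) - ∑ i, (gd.1 i).val)))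
        * Mon (Finsupp.equivFunOnFinite.symm (fun ik => (gd.2 ik).val)) with hF
    have hsub : BSet β s m ⊆ Set.range F := by
      rintro x ⟨g, d, hgd, hds, rfl⟩
      have hgle : ∀ i : Fin (r' + 1), g i ≤ m := by
        intro i
        have h1 : g i ≤ g.degree := by
          rw [degree_univ]
          exact Finset.single_le_sum (fun _ _ => Nat.zero_le _) (Finset.mem_univ i)
        omega
      have hdle : ∀ ik, d ik < s := by
        intro ik
        have h1 : d ik ≤ d.degree := by
          rw [degree_univ]
          exact Finset.single_le_sum (fun _ _ => Nat.zero_le _) (Finset.mem_univ ik)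
        omega
      refine ⟨⟨fun i => ⟨g i.castSucc, by have := hgle i.castSucc; omega⟩,
        fun ik => ⟨d ik, hdle ik⟩⟩, ?_⟩
      have hD : Finsupp.equivFunOnFinite.symm
          (fun ik => ((⟨d ik, hdle ik⟩ : Fin s) : ℕ)) = d := by
        ext ik
        simp [Finsupp.equivFunOnFinite]
      have hsums : (∑ ik, ((⟨d ik, hdle ik⟩ : Fin s) : ℕ)) = d.degree := by
        rw [degree_univ]
      have hsumg : (∑ i : Fin r', g i.castSucc) + g (Fin.last r') = g.degree := by
        rw [degree_univ, Fin.sum_univ_castSucc]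
      have hG : Finsupp.equivFunOnFinite.symm
          (Fin.snoc (n := r') (fun i => g i.castSucc)
            (m - (∑ ik, ((⟨d ik, hdle ik⟩ : Fin s) : ℕ)) - ∑ i : Fin r', g i.castSucc)) = g := by
        ext j
        induction j using Fin.lastCases with
        | last =>
          simp only [Finsupp.coe_equivFunOnFinite_symm, Fin.snoc_last]
          rw [hsums]
          omega
        | cast i =>
          simp [Fin.snoc_castSucc]
      simp only [hF, hD]
      rw [hG]
    have hspan : Submodule.span ℂ (BSet β s m) ≤ Submodule.span ℂ (Set.range F) :=
      Submodule.span_mono hsub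
    -- membership of the independent family
    have hmemf : ∀ h : Fin (q0 + 1) ⊕ Fin (q0 + 1) → Fin (K + 1),
        Mon (Dex m (fun z => (h z).val)) ∈ Submodule.span ℂ (Set.range F) := by
      intro h
      have hsumh : ∑ z, ((h z).val) ≤ m := by
        calc ∑ z, ((h z).val) ≤ ∑ _z : Fin (q0 + 1) ⊕ Fin (q0 + 1), K :=
              Finset.sum_le_sum (fun z _ => by have := (h z).isLt; omega)
          _ = (Fintype.card (Fin (q0+1) ⊕ Fin (q0+1))) * K := by
              rw [Finset.sum_const, smul_eq_mul, Finset.card_univ]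
          _ ≤ m := by
              rw [Fintype.card_sum, Fintype.card_fin, hmdef]
              have : q0 + 1 + (q0 + 1) = d4 := by omega
              rw [this]
      exact hspan (hcl m _ (Dex_degree m _ hsumh))
    have hFD : FiniteDimensional ℂ ↥(Submodule.span ℂ (Set.range F)) :=
      FiniteDimensional.span_of_finite ℂ (Set.finite_range F)
    -- the restricted family is linearly independent
    set famS : (Fin (q0 + 1) ⊕ Fin (q0 + 1) → Fin (K + 1)) →
        ↥(Submodule.span ℂ (Set.range F)) :=
      fun h => ⟨Mon (Dex m (fun z => (h z).val)), hmemf h⟩ with hfamS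
    have hindepS : LinearIndependent ℂ famS := by
      apply LinearIndependent.of_comp (Submodule.span ℂ (Set.range F)).subtype
      have : ((Submodule.span ℂ (Set.range F)).subtype ∘ famS)
          = fun h : Fin (q0 + 1) ⊕ Fin (q0 + 1) → Fin (K + 1) =>
            Mon (Dex m (fun z => (h z).val)) := rfl
      rw [this]
      exact family_indep m K
    -- counting
    have hcard1 : Fintype.card (Fin (q0 + 1) ⊕ Fin (q0 + 1) → Fin (K + 1))
        ≤ Module.finrank ℂ ↥(Submodule.span ℂ (Set.range F)) :=
      hindepS.fintype_card_le_finrank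
    have hcard2 : Module.finrank ℂ ↥(Submodule.span ℂ (Set.range F))
        ≤ Fintype.card ((Fin r' → Fin (m+1)) × (Fin (q0+3) × Fin (q0+3) → Fin s)) := by
      calc Module.finrank ℂ ↥(Submodule.span ℂ (Set.range F))
          ≤ (Set.range F).toFinset.card := finrank_span_le_card _
        _ ≤ _ := by
            rw [Set.toFinset_range]
            exact le_trans Finset.card_image_le (le_of_eq (Finset.card_univ))
    have hcardH : Fintype.card (Fin (q0 + 1) ⊕ Fin (q0 + 1) → Fin (K + 1))
        = (K + 1) ^ d4 := by
      rw [Fintype.card_fun, Fintype.card_fin, Fintype.card_sum, Fintype.card_fin]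
      congr 1
      omega
    have hcardI : Fintype.card ((Fin r' → Fin (m+1)) × (Fin (q0+3) × Fin (q0+3) → Fin s))
        = (m + 1) ^ r' * s ^ N := by
      rw [Fintype.card_prod, Fintype.card_fun, Fintype.card_fun, Fintype.card_fin,
        Fintype.card_fin, Fintype.card_fin]
    -- the numeric contradiction
    have hr' : r' ≤ d4 - 1 := by omega
    have hd41 : 1 ≤ d4 := by omega
    have hnum : (m + 1) ^ r' * s ^ N < (K + 1) ^ d4 := by
      have h1 : (m + 1) ^ r' ≤ (m + 1) ^ (d4 - 1) :=
        Nat.pow_le_pow_right (by omega) hr'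
      have h2 : m + 1 ≤ d4 * (K + 1) := by
        rw [hmdef, Nat.mul_add, Nat.mul_one]
        omega
      have h3 : (m + 1) ^ (d4 - 1) ≤ (d4 * (K + 1)) ^ (d4 - 1) :=
        Nat.pow_le_pow_left h2 _
      have h4 : (d4 * (K + 1)) ^ (d4 - 1) = d4 ^ (d4 - 1) * (K + 1) ^ (d4 - 1) :=
        mul_pow _ _ _
      have h5 : (m + 1) ^ r' * s ^ N ≤ (d4 ^ (d4 - 1) * s ^ N) * (K + 1) ^ (d4 - 1) := by
        calc (m + 1) ^ r' * s ^ N ≤ (d4 ^ (d4-1) * (K + 1) ^ (d4-1)) * s ^ N :=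
              Nat.mul_le_mul_right _ (le_trans h1 (le_trans h3 (le_of_eq h4)))
          _ = (d4 ^ (d4 - 1) * s ^ N) * (K + 1) ^ (d4 - 1) := by ring
      have h6 : (d4 ^ (d4 - 1) * s ^ N) * (K + 1) ^ (d4 - 1) = K * (K + 1) ^ (d4 - 1) := by
        rw [hK]
      have h7 : K * (K + 1) ^ (d4 - 1) < (K + 1) * (K + 1) ^ (d4 - 1) :=
        mul_lt_mul_of_pos_right (by omega) (Nat.pow_pos (by omega))
      have h8 : (K + 1) * (K + 1) ^ (d4 - 1) = (K + 1) ^ d4 := by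
        rw [← pow_succ', Nat.sub_add_cancel hd41]
      omega
    rw [hcardH] at hcard1
    rw [hcardI] at hcard2
    omega

/-! ### Exterior algebra interface -/

section Exterior

open ExteriorAlgebra

variable {V : Type*} [AddCommGroup V] [Module ℂ V]

lemma mem_ext2 (x y : V) : ι ℂ x * ι ℂ y ∈ ⋀[ℂ]^2 V := by
  show ι ℂ x * ι ℂ y ∈ LinearMap.range (ι ℂ : V →ₗ[ℂ] ExteriorAlgebra ℂ V) ^ 2
  rw [pow_two]
  exact Submodule.mul_mem_mul (LinearMap.mem_range_self _ x) (LinearMap.mem_range_self _ y)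

lemma ext2_expand {q : ℕ} (e : Module.Basis (Fin q) ℂ V) (x y : V) :
    ι ℂ x * ι ℂ y = ∑ ik : Fin q × Fin q,
      (e.repr x ik.1 * e.repr y ik.2) • (ι ℂ (e ik.1) * ι ℂ (e ik.2)) := by
  conv_lhs => rw [← Module.Basis.sum_repr e x, ← Module.Basis.sum_repr e y]
  rw [map_sum, map_sum, Finset.sum_mul_sum]
  rw [Fintype.sum_prod_type]
  refine Finset.sum_congr rfl fun i _ => Finset.sum_congr rfl fun k _ => ?_
  rw [map_smul, map_smul, smul_mul_assoc, mul_smul_comm, smul_smul]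

end Exterior

section Exterior2

open ExteriorAlgebra

variable {V : Type*} [AddCommGroup V] [Module ℂ V] {q : ℕ}

/-- basis products in the second exterior power -/
noncomputable def EEe (e : Module.Basis (Fin q) ℂ V) : Fin q × Fin q → ↥(⋀[ℂ]^2 V) :=
  fun ik => ⟨ι ℂ (e ik.1) * ι ℂ (e ik.2), mem_ext2 _ _⟩

lemma ext2_expand_sub (e : Module.Basis (Fin q) ℂ V) (x y : V) :
    (⟨ι ℂ x * ι ℂ y, mem_ext2 x y⟩ : ↥(⋀[ℂ]^2 V)) = ∑ ik : Fin q × Fin q,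
      (e.repr x ik.1 * e.repr y ik.2) • EEe e ik := by
  apply Subtype.ext
  rw [Submodule.coe_sum]
  simpa [EEe] using ext2_expand e x y

lemma EEe_swap (e : Module.Basis (Fin q) ℂ V) (i k : Fin q) :
    EEe e (k, i) = - EEe e (i, k) := by
  apply Subtype.ext
  show ι ℂ (e k) * ι ℂ (e i) = -(ι ℂ (e i) * ι ℂ (e k))
  exact eq_neg_of_add_eq_zero_right (ι_add_mul_swap _ _)

lemma EEe_diag (e : Module.Basis (Fin q) ℂ V) (i : Fin q) : EEe e (i, i) = 0 := by
  apply Subtype.ext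
  exact ι_sq_zero (e i)

lemma EEe_mem_span (e : Module.Basis (Fin q) ℂ V) (ik : Fin q × Fin q) :
    EEe e ik ∈ Submodule.span ℂ
      (Set.range (fun p : {p : Fin q × Fin q // p.1 < p.2} => EEe e p.val)) := by
  obtain ⟨i, k⟩ := ik
  rcases lt_trichotomy i k with h | h | h
  · exact Submodule.subset_span ⟨⟨(i, k), h⟩, rfl⟩
  · subst h
    rw [EEe_diag]
    exact Submodule.zero_mem _
  · rw [show ((i, k) : Fin q × Fin q) = (k, i).swap from rfl]
    rw [show EEe e ((k, i) : Fin q × Fin q).swap = EEe e (k, i).swap from rfl]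
    rw [show ((k, i) : Fin q × Fin q).swap = (i, k) from rfl]
    rw [EEe_swap e k i]
    exact Submodule.neg_mem _ (Submodule.subset_span ⟨⟨(k, i), h⟩, rfl⟩)

lemma ext2_spanned (e : Module.Basis (Fin q) ℂ V) :
    Submodule.span ℂ
      (Set.range (fun p : {p : Fin q × Fin q // p.1 < p.2} => EEe e p.val)) = ⊤ := by
  rw [Submodule.eq_top_iff']
  rintro ⟨xv, hx⟩
  have hx2 : xv ∈ LinearMap.range (ι ℂ : V →ₗ[ℂ] ExteriorAlgebra ℂ V) *
      LinearMap.range (ι ℂ : V →ₗ[ℂ] ExteriorAlgebra ℂ V) := by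
    rw [← pow_two]
    exact hx
  have key : ∃ hz : xv ∈ ⋀[ℂ]^2 V, (⟨xv, hz⟩ : ↥(⋀[ℂ]^2 V)) ∈ Submodule.span ℂ
      (Set.range (fun p : {p : Fin q × Fin q // p.1 < p.2} => EEe e p.val)) := by
    refine Submodule.mul_induction_on hx2 ?_ ?_
    · rintro _ ⟨a, rfl⟩ _ ⟨b, rfl⟩
      refine ⟨mem_ext2 a b, ?_⟩
      rw [ext2_expand_sub e a b]
      exact Submodule.sum_mem _ fun ik _ => Submodule.smul_mem _ _ (EEe_mem_span e ik)
    · rintro z1 z2 ⟨h1, p1⟩ ⟨h2, p2⟩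
      refine ⟨add_mem h1 h2, ?_⟩
      have : (⟨z1 + z2, add_mem h1 h2⟩ : ↥(⋀[ℂ]^2 V)) = ⟨z1, h1⟩ + ⟨z2, h2⟩ := rfl
      rw [this]
      exact Submodule.add_mem _ p1 p2
  obtain ⟨hz, p⟩ := key
  exact p

lemma card_lt_pairs (q : ℕ) : Fintype.card {p : Fin q × Fin q // p.1 < p.2} = q.choose 2 := by
  have eqv : {p : Fin q × Fin q // p.1 < p.2} ≃ Σ k : Fin q, Fin k.val :=
    { toFun := fun p => ⟨p.val.2, ⟨p.val.1.val, p.prop⟩⟩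
      invFun := fun x => ⟨(⟨x.2.val, lt_trans x.2.isLt x.1.isLt⟩, x.1), x.2.isLt⟩
      left_inv := fun _ => rfl
      right_inv := fun _ => rfl }
  rw [Fintype.card_congr eqv, Fintype.card_sigma]
  have h1 : ∑ k : Fin q, Fintype.card (Fin k.val) = ∑ k : Fin q, k.val :=
    Finset.sum_congr rfl fun k _ => Fintype.card_fin _
  rw [h1, Fin.sum_univ_eq_sum_range (fun k => k) q]
  have h2 := Finset.sum_range_id_mul_two q
  have h3 := Nat.choose_two_right q
  omega

end Exterior2

end BeauvilleAux

open ExteriorAlgebra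

/-- A linear subspace `W ⊆ Λ²V` of codimension at most `2q - 4`, `q = dim V ≥ 2`,
contains a nonzero decomposable element `v ∧ w`. -/
theorem subspace_of_small_codim_contains_decomposable
    (V : Type*) [AddCommGroup V] [Module ℂ V] [FiniteDimensional ℂ V]
    (q : ℕ) (hq : 2 ≤ q) (hdim : Module.finrank ℂ V = q)
    (W : Submodule ℂ (⋀[ℂ]^2 V))
    (hW : Nat.choose q 2 ≤ Module.finrank ℂ W + (2 * q - 4)) :
    ∃ (v w : V) (hmem : ι ℂ v * ι ℂ w ∈ ⋀[ℂ]^2 V),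
      LinearIndependent ℂ ![v, w] ∧
      (⟨ι ℂ v * ι ℂ w, hmem⟩ : ⋀[ℂ]^2 V) ∈ W := by
  classical
  let e : Module.Basis (Fin q) ℂ V := (Module.finBasis ℂ V).reindex (finCongr hdim)
  have hspan := BeauvilleAux.ext2_spanned e
  haveI hfin : FiniteDimensional ℂ ↥(⋀[ℂ]^2 V) := by
    have h1 : (⊤ : Submodule ℂ ↥(⋀[ℂ]^2 V)).FG := by
      rw [← hspan]
      exact Submodule.fg_span (Set.finite_range _)
    exact Module.finite_def.mpr h1
  have hrank : Module.finrank ℂ ↥(⋀[ℂ]^2 V) ≤ q.choose 2 := by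
    calc Module.finrank ℂ ↥(⋀[ℂ]^2 V)
        = Module.finrank ℂ ↥(⊤ : Submodule ℂ ↥(⋀[ℂ]^2 V)) := (finrank_top ℂ _).symm
      _ = Module.finrank ℂ ↥(Submodule.span ℂ
            (Set.range (fun p : {p : Fin q × Fin q // p.1 < p.2} =>
              BeauvilleAux.EEe e p.val))) := by rw [hspan]
      _ ≤ (Set.range (fun p : {p : Fin q × Fin q // p.1 < p.2} =>
              BeauvilleAux.EEe e p.val)).toFinset.card := finrank_span_le_card _
      _ ≤ Fintype.card {p : Fin q × Fin q // p.1 < p.2} := by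
          rw [Set.toFinset_range]
          exact le_trans Finset.card_image_le (le_of_eq Finset.card_univ)
      _ = q.choose 2 := BeauvilleAux.card_lt_pairs q
  set r : ℕ := Module.finrank ℂ (↥(⋀[ℂ]^2 V) ⧸ W) with hrdef
  have hr : r ≤ 2 * q - 4 := by
    have h0 := Submodule.finrank_quotient_add_finrank W
    omega
  let bQ : Module.Basis (Fin r) ℂ (↥(⋀[ℂ]^2 V) ⧸ W) := Module.finBasis ℂ _
  let φ : Fin r → (↥(⋀[ℂ]^2 V) →ₗ[ℂ] ℂ) := fun j => (bQ.coord j) ∘ₗ W.mkQ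
  have hWiff : ∀ x : ↥(⋀[ℂ]^2 V), x ∈ W ↔ ∀ j, φ j x = 0 := by
    intro x
    constructor
    · intro hx j
      have h1 : W.mkQ x = 0 := by
        rw [Submodule.mkQ_apply]
        exact (Submodule.Quotient.mk_eq_zero W).mpr hx
      simp [φ, LinearMap.comp_apply, h1]
    · intro h
      have h0 : W.mkQ x = 0 := bQ.forall_coord_eq_zero_iff.mp (fun j => h j)
      rw [Submodule.mkQ_apply] at h0
      exact (Submodule.Quotient.mk_eq_zero W).mp h0
  obtain ⟨v', w', hlin, ⟨ik0, hnz⟩⟩ :=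
    BeauvilleAux.core q r hq hr (fun j ik => φ j (BeauvilleAux.EEe e ik))
  set a : V := e.equivFun.symm v' with hadef
  set b : V := e.equivFun.symm w' with hbdef
  have hra : ∀ i, e.repr a i = v' i := by
    intro i
    have h1 : e.equivFun a = v' := LinearEquiv.apply_symm_apply e.equivFun v'
    rw [Module.Basis.equivFun_apply] at h1
    rw [show e.repr a i = (⇑(e.repr a)) i from rfl, h1]
  have hrb : ∀ i, e.repr b i = w' i := by
    intro i
    have h1 : e.equivFun b = w' := LinearEquiv.apply_symm_apply e.equivFun w'
    rw [Module.Basis.equivFun_apply] at h1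
    rw [show e.repr b i = (⇑(e.repr b)) i from rfl, h1]
  have hphiab : ∀ j, φ j ⟨ι ℂ a * ι ℂ b, BeauvilleAux.mem_ext2 a b⟩
      = ∑ ik : Fin q × Fin q, v' ik.1 * w' ik.2 * (φ j (BeauvilleAux.EEe e ik)) := by
    intro j
    rw [BeauvilleAux.ext2_expand_sub e a b, map_sum]
    exact Finset.sum_congr rfl fun ik _ => by rw [map_smul, hra, hrb, smul_eq_mul]
  have hphiba : ∀ j, φ j ⟨ι ℂ b * ι ℂ a, BeauvilleAux.mem_ext2 b a⟩
      = ∑ ik : Fin q × Fin q, w' ik.1 * v' ik.2 * (φ j (BeauvilleAux.EEe e ik)) := by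
    intro j
    rw [BeauvilleAux.ext2_expand_sub e b a, map_sum]
    exact Finset.sum_congr rfl fun ik _ => by rw [map_smul, hra, hrb, smul_eq_mul]
  have hneg : (⟨ι ℂ b * ι ℂ a, BeauvilleAux.mem_ext2 b a⟩ : ↥(⋀[ℂ]^2 V))
      = - ⟨ι ℂ a * ι ℂ b, BeauvilleAux.mem_ext2 a b⟩ :=
    Subtype.ext (eq_neg_of_add_eq_zero_right (ι_add_mul_swap a b))
  have hzero : ∀ j, φ j ⟨ι ℂ a * ι ℂ b, BeauvilleAux.mem_ext2 a b⟩ = 0 := by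
    intro j
    have hc := hlin j
    have hsplit : ∑ ik : Fin q × Fin q,
        φ j (BeauvilleAux.EEe e ik) * (v' ik.1 * w' ik.2 - v' ik.2 * w' ik.1)
        = φ j ⟨ι ℂ a * ι ℂ b, BeauvilleAux.mem_ext2 a b⟩
          - φ j ⟨ι ℂ b * ι ℂ a, BeauvilleAux.mem_ext2 b a⟩ := by
      rw [hphiab, hphiba, ← Finset.sum_sub_distrib]
      exact Finset.sum_congr rfl fun ik _ => by ring
    rw [hneg, map_neg] at hsplit
    rw [hc] at hsplit
    have : (2 : ℂ) * φ j ⟨ι ℂ a * ι ℂ b, BeauvilleAux.mem_ext2 a b⟩ = 0 := by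
      linear_combination -hsplit
    have h2 : (2 : ℂ) ≠ 0 := two_ne_zero
    exact (mul_eq_zero.mp this).resolve_left h2
  have hli : LinearIndependent ℂ ![a, b] := by
    rw [LinearIndependent.pair_iff]
    intro s t hst
    have hco : ∀ i, s * v' i + t * w' i = 0 := by
      intro i
      have h1 := congrArg (fun z => e.repr z i) hst
      simpa [map_add, map_smul, hra, hrb] using h1
    have h1 := hco ik0.1
    have h2 := hco ik0.2
    constructor
    · have hs : s * (v' ik0.1 * w' ik0.2 - v' ik0.2 * w' ik0.1) = 0 := by
        linear_combination w' ik0.2 * h1 - w' ik0.1 * h2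
      exact (mul_eq_zero.mp hs).resolve_right hnz
    · have ht : t * (v' ik0.1 * w' ik0.2 - v' ik0.2 * w' ik0.1) = 0 := by
        linear_combination v' ik0.1 * h2 - v' ik0.2 * h1
      exact (mul_eq_zero.mp ht).resolve_right hnz
  exact ⟨a, b, BeauvilleAux.mem_ext2 a b, hli, (hWiff _).mpr hzero⟩
end
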